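/- arXiv:math/9912131 — 3 statements merged into one kernel-verified Lean document; each statement's English description precedes it below -/
import Mathlib

section
/- A subset Λ ⊂ ℝ is a spectrum for the unit interval I = [0,1) (i.e., (I, Λ) is a spectral pair) if and only if Λ = α + ℤ for some real number α. -/
open MeasureTheory Complex Set

/-- The exponential `e_λ(x) = e^{i2πλx}` on `ℝ`. -/
noncomputable def expChar1 (l x : ℝ) : ℂ :=
  Complex.exp (2 * Real.pi * Complex.I * ((l * x : ℝ) : ℂ))

/-- `(μ, (e_l)_{l ∈ Λ})` is a spectral family: the exponentials indexed by `Λ` are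
pairwise orthogonal and total in `L²(μ)`. -/
def IsSpectralFamily {α ι : Type*} [MeasurableSpace α] (μ : Measure α)
    (e : ι → α → ℂ) (Λ : Set ι) : Prop :=
  (∀ l ∈ Λ, ∀ l' ∈ Λ, l ≠ l' → ∫ x, (starRingEnd ℂ) (e l x) * e l' x ∂μ = 0) ∧
  ∀ f : α → ℂ, MemLp f 2 μ →
    (∀ l ∈ Λ, ∫ x, (starRingEnd ℂ) (e l x) * f x ∂μ = 0) → f =ᵐ[μ] 0

instance fact_zero_lt_one_real : Fact ((0 : ℝ) < 1) := ⟨one_pos⟩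

namespace SpectralAux

open Real

lemma two_pi_I_ne_zero : (2 * Real.pi * Complex.I : ℂ) ≠ 0 := by
  simp [Real.pi_ne_zero, Complex.I_ne_zero]

lemma conj_expChar1 (l x : ℝ) :
    (starRingEnd ℂ) (expChar1 l x) =
      Complex.exp (-(2 * Real.pi * Complex.I * ((l * x : ℝ) : ℂ))) := by
  rw [expChar1, ← Complex.exp_conj]
  congr 1
  simp only [map_mul, Complex.conj_I, Complex.conj_ofReal, map_ofNat]
  ring_nf

lemma mul_expChar1 (l l' x : ℝ) :
    (starRingEnd ℂ) (expChar1 l x) * expChar1 l' x =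
      Complex.exp (2 * Real.pi * Complex.I * ((l' - l : ℝ) : ℂ) * (x : ℂ)) := by
  rw [conj_expChar1, expChar1, ← Complex.exp_add]
  congr 1
  push_cast
  ring

lemma keyIntegral (r : ℝ) (hr : r ≠ 0) :
    (∫ x in Set.Ioc (0 : ℝ) 1,
        Complex.exp (2 * Real.pi * Complex.I * (r : ℂ) * (x : ℂ))) = 0 ↔
      ∃ n : ℤ, r = n := by
  have hc : (2 * Real.pi * Complex.I * (r : ℂ)) ≠ 0 := by
    apply mul_ne_zero two_pi_I_ne_zero
    exact_mod_cast hr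
  rw [← intervalIntegral.integral_of_le zero_le_one]
  rw [integral_exp_mul_complex hc]
  simp only [Complex.ofReal_one, Complex.ofReal_zero, mul_one, mul_zero, Complex.exp_zero]
  rw [div_eq_zero_iff]
  simp only [hc, or_false, sub_eq_zero]
  rw [Complex.exp_eq_one_iff]
  constructor
  · rintro ⟨n, hn⟩
    refine ⟨n, ?_⟩
    have : (2 * Real.pi * Complex.I) * (r : ℂ) = (2 * Real.pi * Complex.I) * (n : ℂ) := by
      rw [hn]; ring
    exact_mod_cast mul_left_cancel₀ two_pi_I_ne_zero this
  · rintro ⟨n, rfl⟩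
    exact ⟨n, by push_cast; ring⟩

lemma norm_expChar1 (l x : ℝ) : ‖expChar1 l x‖ = 1 := by
  rw [expChar1, Complex.norm_exp]
  norm_num [Complex.mul_re]

lemma continuous_expChar1 (l : ℝ) : Continuous (expChar1 l) := by
  unfold expChar1; fun_prop

lemma memℒp_expChar1 (l : ℝ) : MemLp (expChar1 l) 2 (volume.restrict (Set.Ioc (0 : ℝ) 1)) := by
  haveI : IsFiniteMeasure (volume.restrict (Set.Ioc (0 : ℝ) 1)) :=
    ⟨by simp [Real.volume_Ioc]⟩
  exact MemLp.of_bound (continuous_expChar1 l).aestronglyMeasurable 1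
    (Filter.Eventually.of_forall fun x => (norm_expChar1 l x).le)

lemma expChar1_not_ae_zero (l : ℝ) :
    ¬ (expChar1 l =ᵐ[volume.restrict (Set.Ioc (0 : ℝ) 1)] 0) := by
  intro h
  have hFalse : ∀ᵐ x ∂(volume.restrict (Set.Ioc (0 : ℝ) 1)), False :=
    h.mono fun x hx => by simp only [expChar1, Pi.zero_apply] at hx; exact Complex.exp_ne_zero _ hx
  rw [ae_iff] at hFalse
  simp [Real.volume_Ioc] at hFalse

/-- The projection from the circle back to `(0,1]`. -/
noncomputable def circleProj : AddCircle (1 : ℝ) → ℝ :=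
  fun t => ((AddCircle.equivIoc 1 0 t : Set.Ioc (0 : ℝ) (0 + 1)) : ℝ)

lemma circleProj_coe {x : ℝ} (hx : x ∈ Set.Ioc (0 : ℝ) 1) :
    circleProj (x : AddCircle (1 : ℝ)) = x := by
  have hx' : x ∈ Set.Ioc (0 : ℝ) (0 + 1) := by rwa [zero_add]
  have : (AddCircle.equivIoc 1 0) ↑x = ⟨x, hx'⟩ := by
    rw [Equiv.apply_eq_iff_eq_symm_apply]; rfl
  show ((AddCircle.equivIoc 1 0 ((x : ℝ) : AddCircle (1 : ℝ)) : Set.Ioc (0:ℝ) (0+1)) : ℝ) = x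
  rw [this]

lemma measurable_circleProj : Measurable circleProj :=
  measurable_subtype_coe.comp (AddCircle.measurableEquivIoc 1 0).measurable

lemma measurePreserving_circleProj :
    MeasurePreserving circleProj (volume : Measure (AddCircle (1 : ℝ)))
      (volume.restrict (Set.Ioc (0 : ℝ) 1)) := by
  refine ⟨measurable_circleProj, ?_⟩
  have hmk := AddCircle.measurePreserving_mk 1 0
  rw [zero_add] at hmk
  rw [← hmk.map_eq, Measure.map_map measurable_circleProj AddCircle.measurable_mk']
  have hae : (circleProj ∘ (QuotientAddGroup.mk : ℝ → AddCircle (1 : ℝ)))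
      =ᵐ[volume.restrict (Set.Ioc (0 : ℝ) 1)] id :=
    Filter.eventuallyEq_of_mem (self_mem_ae_restrict measurableSet_Ioc)
      fun x hx => circleProj_coe hx
  rw [Measure.map_congr hae, Measure.map_id]

lemma haar_eq_volume : (AddCircle.haarAddCircle : Measure (AddCircle (1 : ℝ))) = volume := by
  rw [AddCircle.volume_eq_smul_haarAddCircle]
  simp

end SpectralAux

open SpectralAux

/-- `Λ ⊂ ℝ` is a spectrum for `I = [0,1)` iff `Λ = α + ℤ` for some `α ∈ ℝ`. -/
theorem stmt2 (Λ : Set ℝ) :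
    IsSpectralFamily (volume.restrict (Set.Ico (0 : ℝ) 1)) expChar1 Λ ↔
      ∃ α : ℝ, Λ = {x : ℝ | ∃ n : ℤ, x = α + n} := by
  have hmeas : volume.restrict (Set.Ico (0 : ℝ) 1) = volume.restrict (Set.Ioc (0 : ℝ) 1) :=
    Measure.restrict_congr_set Ico_ae_eq_Ioc
  rw [IsSpectralFamily, hmeas]
  constructor
  · rintro ⟨horth, htot⟩
    rcases Set.eq_empty_or_nonempty Λ with rfl | ⟨α, hα⟩
    · exfalso
      exact expChar1_not_ae_zero 0 (htot (expChar1 0) (memℒp_expChar1 0)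
        (fun l hl => absurd hl (Set.notMem_empty l)))
    · refine ⟨α, ?_⟩
      have hsub : ∀ l ∈ Λ, ∃ m : ℤ, l = α + m := by
        intro l hl
        rcases eq_or_ne l α with rfl | hla
        · exact ⟨0, by simp⟩
        · have h0 := horth α hα l hl (Ne.symm hla)
          simp_rw [mul_expChar1] at h0
          obtain ⟨n, hn⟩ := (keyIntegral _ (sub_ne_zero.mpr hla)).mp h0
          exact ⟨n, by linarith⟩
      ext x
      simp only [Set.mem_setOf_eq]
      constructor
      · exact hsub x
      · rintro ⟨n, rfl⟩
        by_contra hx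
        refine expChar1_not_ae_zero (α + n)
          (htot (expChar1 (α + n)) (memℒp_expChar1 _) ?_)
        intro l hl
        obtain ⟨m, rfl⟩ := hsub l hl
        simp_rw [mul_expChar1]
        refine (keyIntegral _ ?_).mpr ⟨n - m, by push_cast; ring⟩
        have : (α + n : ℝ) ≠ α + m := fun h => hx (h ▸ hl)
        intro h
        exact this (by linarith)
  · rintro ⟨α, rfl⟩
    constructor
    · rintro l ⟨n, rfl⟩ l' ⟨m, rfl⟩ hne
      simp_rw [mul_expChar1]
      refine (keyIntegral _ ?_).mpr ⟨m - n, by push_cast; ring⟩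
      intro h
      exact hne (by linarith)
    · intro f hf hint
      set h : ℝ → ℂ := fun x => (starRingEnd ℂ) (expChar1 α x) * f x with hh_def
      have hh : MemLp h 2 (volume.restrict (Set.Ioc (0 : ℝ) 1)) := by
        refine MemLp.of_le hf ?_ (Filter.Eventually.of_forall fun x => ?_)
        · exact ((Complex.continuous_conj.comp (continuous_expChar1 α)).aestronglyMeasurable).mul
            hf.aestronglyMeasurable
        · show ‖(starRingEnd ℂ) (expChar1 α x) * f x‖ ≤ ‖f x‖
          rw [norm_mul, RCLike.norm_conj, norm_expChar1, one_mul]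
      set H : AddCircle (1 : ℝ) → ℂ := h ∘ circleProj with hH_def
      have hH : MemLp H 2 (volume : Measure (AddCircle (1 : ℝ))) :=
        hh.comp_measurePreserving measurePreserving_circleProj
      have hHhaar : MemLp H 2 (AddCircle.haarAddCircle : Measure (AddCircle (1 : ℝ))) := by
        rw [haar_eq_volume]; exact hH
      have hcoeff : ∀ n : ℤ, fourierCoeff H n = 0 := by
        intro n
        have hpre := AddCircle.integral_preimage 1 0 (fun t : AddCircle (1 : ℝ) => fourier (-n) t • H t)
        rw [zero_add] at hpre
        rw [fourierCoeff, haar_eq_volume, ← hpre, ← hint (α + n) ⟨n, rfl⟩]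
        refine setIntegral_congr_fun measurableSet_Ioc fun x hx => ?_
        have hHx : H (x : AddCircle (1 : ℝ)) = h x := by
          rw [hH_def, Function.comp_apply, circleProj_coe hx]
        simp only [hHx, hh_def, smul_eq_mul, fourier_coe_apply, conj_expChar1]
        rw [← mul_assoc, ← Complex.exp_add]
        congr 1
        push_cast
        ring
      set HL := hHhaar.toLp H with hHL_def
      have hrepr : fourierBasis.repr HL = 0 := by
        ext n
        rw [fourierBasis_repr]
        have : fourierCoeff (HL : AddCircle (1 : ℝ) → ℂ) n = fourierCoeff H n := by
          refine integral_congr_ae ?_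
          filter_upwards [hHhaar.coeFn_toLp] with t ht
          rw [ht]
        simp [this, hcoeff n]
      have hHL0 : HL = 0 := by
        simpa using fourierBasis.repr.map_eq_zero_iff.mp hrepr
      have hH0 : H =ᵐ[(volume : Measure (AddCircle (1 : ℝ)))] 0 := by
        have h1 : H =ᵐ[(AddCircle.haarAddCircle : Measure (AddCircle (1 : ℝ)))]
            (HL : AddCircle (1 : ℝ) → ℂ) := hHhaar.coeFn_toLp.symm
        have h2 : (HL : AddCircle (1 : ℝ) → ℂ)
            =ᵐ[(AddCircle.haarAddCircle : Measure (AddCircle (1 : ℝ)))] 0 := by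
          rw [hHL0]; exact Lp.coeFn_zero _ _ _
        rw [← haar_eq_volume]
        exact h1.trans h2
      have hqmp : Measure.QuasiMeasurePreserving ((↑) : ℝ → AddCircle (1 : ℝ))
          (volume.restrict (Set.Ioc (0 : ℝ) 1)) (volume : Measure (AddCircle (1 : ℝ))) := by
        have := AddCircle.measurePreserving_mk 1 0
        rw [zero_add] at this
        exact this.quasiMeasurePreserving
      have hcomp : (H ∘ ((↑) : ℝ → AddCircle (1 : ℝ))) =ᵐ[volume.restrict (Set.Ioc (0 : ℝ) 1)] 0 :=
        hH0.comp_tendsto hqmp.tendsto_ae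
      filter_upwards [hcomp, self_mem_ae_restrict measurableSet_Ioc] with x hx hmem
      have hHx : H (x : AddCircle (1 : ℝ)) = h x := by
        rw [hH_def, Function.comp_apply, circleProj_coe hmem]
      have hx0 : h x = 0 := by rw [← hHx]; exact hx
      rw [hh_def] at hx0
      simp only [conj_expChar1] at hx0
      rcases mul_eq_zero.mp hx0 with h1 | h2
      · exact absurd h1 (Complex.exp_ne_zero _)
      · exact h2
end

section
/- Let R be an invertible d×d real matrix, L = Rℤ^d, and L a finite set in ℝ^d (denoted 𝐋) with L ∩ (𝐋 − 𝐋) = {0}. If |𝐋| = |det R| and every element of L + (𝐋 − 𝐋) other than 0 has some coordinate equal to a nonzero integer, then I^d is an (L + 𝐋)-tile, i.e., the translates of the unit cube by L + 𝐋 tile ℝ^d. -/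
open MeasureTheory Set

/-- The family of translates `(Ω + t)_{t ∈ T}` tiles (w.r.t. the measure `μ`):
the translates cover up to measure zero and pairwise intersections have measure zero. -/
def IsTiling {α : Type*} [MeasurableSpace α] [Add α] (μ : Measure α)
    (Ω : Set α) (T : Set α) : Prop :=
  μ ((⋃ t ∈ T, (fun x => x + t) '' Ω)ᶜ) = 0 ∧
  ∀ t ∈ T, ∀ t' ∈ T, t ≠ t' →
    μ (((fun x => x + t) '' Ω) ∩ ((fun x => x + t') '' Ω)) = 0

/-- The unit cube `[0,1)^d` in `ℝ^d`. -/
def unitCube (d : ℕ) : Set (Fin d → ℝ) := Set.univ.pi fun _ => Set.Ico (0 : ℝ) 1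

theorem cube_disjoint {d : ℕ} {t t' : Fin d → ℝ} (j : Fin d) (n : ℤ) (hn : n ≠ 0)
    (h : t j - t' j = n) :
    Disjoint ((fun x => x + t) '' unitCube d) ((fun x => x + t') '' unitCube d) := by
  rw [Set.disjoint_left]
  rintro x ⟨y, hy, rfl⟩ ⟨z, hz, hzx⟩
  have hyj : y j ∈ Set.Ico (0:ℝ) 1 := hy j (mem_univ j)
  have hzj : z j ∈ Set.Ico (0:ℝ) 1 := hz j (mem_univ j)
  have he : z j + t' j = y j + t j := congrFun hzx j
  have h1 : (1:ℝ) ≤ |(n:ℝ)| := by exact_mod_cast Int.one_le_abs hn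
  rw [← h] at h1
  have h0 : t j - t' j = z j - y j := by linarith
  have h2 : |z j - y j| < 1 :=
    abs_lt.mpr ⟨by linarith [hzj.1, hyj.2], by linarith [hzj.2, hyj.1]⟩
  rw [h0] at h1; linarith

open Submodule Pointwise in
/-- Let `L = Rℤ^d` be a lattice and `Lbold` a finite set with `L ∩ (Lbold − Lbold) = {0}`.
If `|Lbold| = |det R|` and every nonzero element of `L + (Lbold − Lbold)` has some coordinate
equal to a nonzero integer, then the unit cube `I^d` is an `(L + Lbold)`-tile. -/
theorem stmt12 (d : ℕ) (R : Matrix (Fin d) (Fin d) ℝ) (hR : IsUnit R.det)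
    (Lbold : Finset (Fin d → ℝ))
    (hmeet : {l | ∃ k : Fin d → ℤ, l = R.mulVec fun j => (k j : ℝ)} ∩
        {x | ∃ a ∈ Lbold, ∃ b ∈ Lbold, x = a - b} = {0})
    (hcard : (Lbold.card : ℝ) = |R.det|)
    (hzero : ∀ l : Fin d → ℝ, (∃ k : Fin d → ℤ, l = R.mulVec fun j => (k j : ℝ)) →
      ∀ a ∈ Lbold, ∀ b ∈ Lbold, l + (a - b) ≠ 0 →
        ∃ j : Fin d, ∃ n : ℤ, n ≠ 0 ∧ (l + (a - b)) j = n) :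
    IsTiling volume (unitCube d)
      {t | ∃ l : Fin d → ℝ, (∃ k : Fin d → ℤ, l = R.mulVec fun j => (k j : ℝ)) ∧
        ∃ a ∈ Lbold, t = l + a} := by
  classical
  haveI : Invertible R := R.invertibleOfIsUnitDet hR
  set T : Set (Fin d → ℝ) :=
    {t | ∃ l : Fin d → ℝ, (∃ k : Fin d → ℤ, l = R.mulVec fun j => (k j : ℝ)) ∧
        ∃ a ∈ Lbold, t = l + a} with hTdef
  -- basic membership facts about the lattice-set
  have h0L : ∃ k : Fin d → ℤ, (0 : Fin d → ℝ) = R.mulVec fun j => (k j : ℝ) :=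
    ⟨fun _ => 0, by
      have h : (fun j : Fin d => ((0:ℤ) : ℝ)) = (0 : Fin d → ℝ) := by funext j; simp
      simp only [h, Matrix.mulVec_zero]⟩
  have hsubL : ∀ l l' : Fin d → ℝ,
      (∃ k : Fin d → ℤ, l = R.mulVec fun j => (k j : ℝ)) →
      (∃ k : Fin d → ℤ, l' = R.mulVec fun j => (k j : ℝ)) →
      (∃ k : Fin d → ℤ, l - l' = R.mulVec fun j => (k j : ℝ)) := by
    rintro l l' ⟨k, rfl⟩ ⟨k', rfl⟩
    refine ⟨k - k', ?_⟩
    have hc : (fun j => (((k - k') j : ℤ) : ℝ)) =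
        (fun j => (k j : ℝ)) - fun j => (k' j : ℝ) := by
      funext j; simp
    rw [hc, Matrix.mulVec_sub]
  -- disjointness of translated cubes over distinct elements of `T`
  have hdis : ∀ t ∈ T, ∀ t' ∈ T, t ≠ t' →
      Disjoint ((fun x => x + t) '' unitCube d) ((fun x => x + t') '' unitCube d) := by
    rintro t ⟨l, hl, a, ha, rfl⟩ t' ⟨l', hl', a', ha', rfl⟩ hne
    have heq : (l - l') + (a - a') = (l + a) - (l' + a') := by abel
    have hne0 : (l - l') + (a - a') ≠ 0 := by
      rw [heq]; exact sub_ne_zero.mpr hne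
    obtain ⟨j, n, hn, hjn⟩ := hzero (l - l') (hsubL l l' hl hl') a ha a' ha' hne0
    refine cube_disjoint j n hn ?_
    have h2 : ((l - l') + (a - a')) j = (l + a) j - (l' + a') j := by
      simp only [Pi.add_apply, Pi.sub_apply]; ring
    rw [← h2]; exact hjn
  -- measurability and volume of translated cubes
  have hcubeMeas : MeasurableSet (unitCube d) :=
    MeasurableSet.univ_pi fun _ => measurableSet_Ico
  have himgMeas : ∀ t : Fin d → ℝ, MeasurableSet ((fun x => x + t) '' unitCube d) := by
    intro t; rw [Set.image_add_right]; exact hcubeMeas.preimage (measurable_add_const _)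
  have hvol1 : ∀ t : Fin d → ℝ, volume ((fun x => x + t) '' unitCube d) = 1 := by
    intro t
    rw [Set.image_add_right, measure_preimage_add_right]
    simp [unitCube, volume_pi_pi]
  -- the lattice as the ℤ-span of the basis of columns of `R`
  set b : Module.Basis (Fin d) ℝ (Fin d → ℝ) :=
    (Pi.basisFun ℝ (Fin d)).map (R.toLinearEquiv' ‹_›) with hb
  have hbij : ∀ i j, b i j = R j i := by
    intro i j
    simp [hb, Matrix.toLinearEquiv', Matrix.mulVec_single]
  have key : ∀ c : Fin d → ℤ, (∑ i, c i • b i) = R.mulVec (fun j => (c j : ℝ)) := by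
    intro c; funext j
    simp only [Finset.sum_apply, Pi.smul_apply, hbij, Matrix.mulVec, dotProduct]
    refine Finset.sum_congr rfl fun i _ => ?_
    rw [zsmul_eq_mul, mul_comm]
  set Λ : Submodule ℤ (Fin d → ℝ) := span ℤ (Set.range ⇑b) with hΛ
  have hspan : ∀ x, x ∈ Λ ↔ ∃ k : Fin d → ℤ, x = R.mulVec fun j => (k j : ℝ) := by
    intro x
    rw [hΛ, mem_span_range_iff_exists_fun]
    constructor
    · rintro ⟨c, rfl⟩; exact ⟨c, key c⟩
    · rintro ⟨c, rfl⟩; exact ⟨c, key c⟩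
  haveI : Countable Λ := by
    have hf : Function.Surjective
        (fun k : Fin d → ℤ =>
          (⟨R.mulVec fun j => (k j : ℝ), (hspan _).2 ⟨k, rfl⟩⟩ : Λ)) := by
      rintro ⟨x, hx⟩
      obtain ⟨k, hk⟩ := (hspan x).1 hx
      exact ⟨k, Subtype.ext hk.symm⟩
    exact hf.countable
  haveI : MeasurableVAdd ↥Λ (Fin d → ℝ) :=
    { measurable_const_vadd := fun c => measurable_const_add (c : Fin d → ℝ)
      measurable_vadd_const := fun x =>
        (measurable_subtype_coe.add_const x : Measurable fun c : Λ => (c : Fin d → ℝ) + x) }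
  haveI : VAddInvariantMeasure Λ (Fin d → ℝ) volume :=
    ⟨fun c s _ => measure_preimage_add volume (↑c) s⟩
  set s0 : Set (Fin d → ℝ) := ZSpan.fundamentalDomain b with hs0def
  have hfd : IsAddFundamentalDomain Λ s0 volume := ZSpan.isAddFundamentalDomain b volume
  have hs0meas : MeasurableSet s0 := ZSpan.fundamentalDomain_measurableSet b
  have hs0vol : volume s0 = ENNReal.ofReal |R.det| := by
    rw [hs0def, ZSpan.volume_fundamentalDomain]
    congr 1
    have hM : (Matrix.of ⇑b) = R.transpose := by
      ext i j; exact hbij i j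
    rw [hM, Matrix.det_transpose]
  -- the packing set F
  set F : Set (Fin d → ℝ) := ⋃ a ∈ Lbold, (fun x => x + a) '' unitCube d with hF
  have hFmeas : MeasurableSet F :=
    Lbold.measurableSet_biUnion fun a _ => himgMeas a
  have hFvol : volume F = ENNReal.ofReal |R.det| := by
    have hpd : Set.PairwiseDisjoint (↑Lbold)
        (fun a : Fin d → ℝ => (fun x => x + a) '' unitCube d) := by
      intro a ha a' ha' hne
      have hne0 : (0 : Fin d → ℝ) + (a - a') ≠ 0 := by
        simpa [sub_ne_zero] using hne
      obtain ⟨j, n, hn, hjn⟩ := hzero 0 h0L a ha a' ha' hne0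
      refine cube_disjoint j n hn ?_
      have h2 : ((0 : Fin d → ℝ) + (a - a')) j = a j - a' j := by
        simp only [Pi.add_apply, Pi.sub_apply, Pi.zero_apply]; ring
      rw [← h2]; exact hjn
    rw [hF, measure_biUnion_finset hpd fun a _ => himgMeas a]
    simp only [hvol1, Finset.sum_const, nsmul_eq_mul, mul_one]
    rw [← ENNReal.ofReal_natCast, ← abs_of_nonneg (α := ℝ) (Nat.cast_nonneg Lbold.card)]
    rw [show |(Lbold.card : ℝ)| = |R.det| by rw [abs_of_nonneg (Nat.cast_nonneg _), hcard]]
  -- translates of F by lattice elements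
  have h4 : ∀ (g : Λ) (s : Set (Fin d → ℝ)),
      g +ᵥ s = (fun x => (g : Fin d → ℝ) + x) '' s := by
    intro g s; rw [← Set.image_vadd]; rfl
  have hgF : ∀ g : Λ, (g +ᵥ F) =
      ⋃ a ∈ Lbold, (fun x => x + ((g : Fin d → ℝ) + a)) '' unitCube d := by
    intro g
    rw [h4 g F, hF, Set.image_iUnion₂]
    refine Set.iUnion₂_congr fun a _ => ?_
    rw [← Set.image_comp]
    have hfun : ((fun x => (g : Fin d → ℝ) + x) ∘ fun x => x + a) =
        fun x => x + ((g : Fin d → ℝ) + a) := by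
      funext x
      show (g : Fin d → ℝ) + (x + a) = x + ((g : Fin d → ℝ) + a)
      abel
    rw [hfun]
  have hmemT : ∀ (g : Λ), ∀ a ∈ Lbold, ((g : Fin d → ℝ) + a) ∈ T :=
    fun g a ha => ⟨g, (hspan _).1 g.2, a, ha, rfl⟩
  have hmeas_gF : ∀ g : Λ, MeasurableSet (g +ᵥ F) := by
    intro g; rw [hgF]
    exact Lbold.measurableSet_biUnion fun a _ => himgMeas _
  have hGdis : ∀ g g' : Λ, g ≠ g' → Disjoint (g +ᵥ F) (g' +ᵥ F) := by
    intro g g' hne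
    rw [hgF, hgF]
    rw [Set.disjoint_left]
    intro x hx hx'
    simp only [Set.mem_iUnion, exists_prop] at hx hx'
    obtain ⟨a, ha, hxa⟩ := hx
    obtain ⟨a', ha', hxa'⟩ := hx'
    have htne : (g : Fin d → ℝ) + a ≠ (g' : Fin d → ℝ) + a' := by
      intro h
      apply hne
      have hdmem : ((g : Fin d → ℝ) - (g' : Fin d → ℝ)) ∈
          ({l | ∃ k : Fin d → ℤ, l = R.mulVec fun j => (k j : ℝ)} ∩
            {x | ∃ a ∈ Lbold, ∃ b ∈ Lbold, x = a - b}) := by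
        refine ⟨hsubL _ _ ((hspan _).1 g.2) ((hspan _).1 g'.2), a', ha', a, ha, ?_⟩
        funext j
        have := congrFun h j
        simp only [Pi.add_apply] at this
        simp only [Pi.sub_apply]
        linarith
      rw [hmeet, Set.mem_singleton_iff, sub_eq_zero] at hdmem
      exact Subtype.ext hdmem
    exact Set.disjoint_left.mp
      (hdis _ (hmemT g a ha) _ (hmemT g' a' ha') htne) hxa hxa'
  -- the union of all translates equals the union of lattice translates of F
  have hUnion : (⋃ t ∈ T, (fun x => x + t) '' unitCube d) = ⋃ g : Λ, g +ᵥ F := by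
    ext x
    simp only [Set.mem_iUnion, exists_prop]
    constructor
    · rintro ⟨t, ⟨l, hl, a, ha, rfl⟩, hx⟩
      refine ⟨⟨l, (hspan l).2 hl⟩, ?_⟩
      rw [hgF]
      simp only [Set.mem_iUnion, exists_prop]
      exact ⟨a, ha, hx⟩
    · rintro ⟨g, hg⟩
      rw [hgF] at hg
      simp only [Set.mem_iUnion, exists_prop] at hg
      obtain ⟨a, ha, hx⟩ := hg
      exact ⟨(g : Fin d → ℝ) + a, hmemT g a ha, hx⟩
  -- covering computation
  have hsum : volume (s0 ∩ ⋃ g : Λ, g +ᵥ F) = volume F := by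
    rw [Set.inter_iUnion]
    rw [measure_iUnion
      (fun g g' hne =>
        ((hGdis g g' hne).mono Set.inter_subset_right Set.inter_subset_right))
      (fun g => hs0meas.inter (hmeas_gF g))]
    rw [hfd.measure_eq_tsum F]
    exact tsum_congr fun g => by rw [Set.inter_comm]
  have hUm : MeasurableSet (⋃ g : Λ, g +ᵥ F) := MeasurableSet.iUnion hmeas_gF
  have hdiff : volume (s0 \ ⋃ g : Λ, g +ᵥ F) = 0 := by
    rw [← Set.diff_self_inter]
    rw [measure_diff Set.inter_subset_left
      ((hs0meas.inter hUm).nullMeasurableSet)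
      (by rw [hsum, hFvol]; exact ENNReal.ofReal_ne_top)]
    rw [hsum, hFvol, hs0vol, tsub_self]
  constructor
  · -- coverage
    rw [hUnion]
    refine hfd.measure_zero_of_invariant _ (fun g => ?_) ?_
    · -- invariance of the complement
      have hinv : g +ᵥ (⋃ g' : Λ, g' +ᵥ F) = ⋃ g' : Λ, g' +ᵥ F := by
        rw [Set.vadd_set_iUnion]
        ext x
        simp only [Set.mem_iUnion]
        constructor
        · rintro ⟨g', hx⟩
          exact ⟨g + g', by rwa [vadd_vadd] at hx⟩
        · rintro ⟨g', hx⟩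
          exact ⟨-g + g', by rwa [vadd_vadd, add_neg_cancel_left]⟩
      have hcompl : g +ᵥ (⋃ g' : Λ, g' +ᵥ F)ᶜ = (g +ᵥ ⋃ g' : Λ, g' +ᵥ F)ᶜ := by
        ext x
        rw [Set.mem_vadd_set_iff_neg_vadd_mem, Set.mem_compl_iff, Set.mem_compl_iff,
          Set.mem_vadd_set_iff_neg_vadd_mem]
      rw [hcompl, hinv]
    · have heq : (⋃ g : Λ, g +ᵥ F)ᶜ ∩ s0 = s0 \ ⋃ g : Λ, g +ᵥ F := by
        rw [Set.inter_comm, Set.diff_eq]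
      rw [heq]; exact hdiff
  · -- pairwise disjointness
    intro t ht t' ht' hne
    rw [Set.disjoint_iff_inter_eq_empty.mp (hdis t ht t' ht' hne), measure_empty]
end

section
/- If the translates of the unit cube I^d by a set T ⊂ ℝ^d tile ℝ^d, and t ≠ t' are in T, then some coordinate of t − t' is a nonzero integer (Keller's theorem). -/
open MeasureTheory Set ENNReal

section KellerAux

/-- Indexed tiling predicate. -/
def Tiles {α : Type*} {ι : Type*} [MeasurableSpace α] (μ : Measure α) (A : ι → Set α) : Prop :=
  μ ((⋃ i, A i)ᶜ) = 0 ∧ ∀ i k : ι, i ≠ k → μ (A i ∩ A k) = 0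

theorem tiles_preimage {α β ι : Type*} [MeasurableSpace α] [MeasurableSpace β]
    {μ : Measure α} {ν : Measure β} (e : α ≃ᵐ β) (hm : MeasurePreserving e μ ν)
    {A : ι → Set β} (h : Tiles ν A) : Tiles μ (fun i => e ⁻¹' A i) := by
  constructor
  · rw [← preimage_iUnion, ← preimage_compl, hm.measure_preimage_equiv]
    exact h.1
  · intro i k hik
    rw [← preimage_inter, hm.measure_preimage_equiv]
    exact h.2 i k hik

theorem vol_Ico_inter {a b : ℝ} :
    volume (Ico a (a + 1) ∩ Ico b (b + 1)) = 0 ↔ 1 ≤ |a - b| := by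
  rw [Set.Ico_inter_Ico, Real.volume_Ico, ENNReal.ofReal_eq_zero, sub_nonpos]
  rcases le_total a b with hab | hab
  · rw [abs_sub_comm, abs_of_nonneg (by linarith)]
    constructor
    · intro h
      have h1 : min (a + 1) (b + 1) = a + 1 := min_eq_left (by linarith)
      have h2 : max a b = b := max_eq_right hab
      rw [h1, h2] at h; linarith
    · intro h
      have h2 : max a b = b := max_eq_right hab
      rw [h2]
      exact le_trans (min_le_left _ _) (by linarith)
  · rw [abs_of_nonneg (by linarith)]
    constructor
    · intro h
      have h1 : min (a + 1) (b + 1) = b + 1 := min_eq_right (by linarith)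
      have h2 : max a b = a := max_eq_left hab
      rw [h1, h2] at h; linarith
    · intro h
      have h2 : max a b = a := max_eq_left hab
      rw [h2]
      exact le_trans (min_le_right _ _) (by linarith)


theorem oneD_covered {ι : Type*} {S : Set ι} {c : ι → ℝ}
    (cov : volume ((⋃ i ∈ S, Ico (c i) (c i + 1))ᶜ) = 0)
    {u v : ℝ} (huv : u < v) :
    ∃ x ∈ Ioo u v, ∃ k ∈ S, x ∈ Ico (c k) (c k + 1) := by
  by_contra hco
  push_neg at hco
  have hsub : Ioo u v ⊆ (⋃ i ∈ S, Ico (c i) (c i + 1))ᶜ := by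
    intro x hx
    simp only [mem_compl_iff, mem_iUnion, not_exists]
    intro k hk hxk
    exact (hco x hx k hk) hxk
  have := measure_mono_null hsub cov
  rw [Real.volume_Ioo, ENNReal.ofReal_eq_zero] at this
  linarith

theorem oneD_succ {ι : Type*} {S : Set ι} {c : ι → ℝ}
    (sep : ∀ i ∈ S, ∀ k ∈ S, i ≠ k → 1 ≤ |c i - c k|)
    (cov : volume ((⋃ i ∈ S, Ico (c i) (c i + 1))ᶜ) = 0)
    {i : ι} (hi : i ∈ S) : ∃ k ∈ S, c k = c i + 1 := by
  obtain ⟨x₀, hx₀, k₀, hk₀S, hx₀k⟩ := oneD_covered cov (show c i + 1 < c i + 2 by linarith)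
  obtain ⟨hx₀1, hx₀2⟩ := hx₀
  obtain ⟨hk₀1, hk₀2⟩ := hx₀k
  have h1 : c i < c k₀ := by linarith
  have hki : k₀ ≠ i := by intro h; rw [h] at h1; linarith
  have h2 : c i + 1 ≤ c k₀ := by
    have := sep k₀ hk₀S i hi hki
    rcases abs_cases (c k₀ - c i) with ⟨he, _⟩ | ⟨he, _⟩ <;> rw [he] at this <;> linarith
  rcases eq_or_lt_of_le h2 with he | hlt
  · exact ⟨k₀, hk₀S, he.symm⟩
  · exfalso
    obtain ⟨x₁, hx₁, k₁, hk₁S, hx₁k⟩ := oneD_covered cov hlt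
    obtain ⟨hx₁1, hx₁2⟩ := hx₁
    obtain ⟨hk₁1, hk₁2⟩ := hx₁k
    have h3 : c i < c k₁ := by linarith
    have hk₁i : k₁ ≠ i := by intro h; rw [h] at h3; linarith
    have h4 : c i + 1 ≤ c k₁ := by
      have := sep k₁ hk₁S i hi hk₁i
      rcases abs_cases (c k₁ - c i) with ⟨he, _⟩ | ⟨he, _⟩ <;> rw [he] at this <;> linarith
    have h5 : c k₁ < c k₀ := by linarith
    have hk₁k₀ : k₁ ≠ k₀ := by intro h; rw [h] at h5; linarith
    have := sep k₁ hk₁S k₀ hk₀S hk₁k₀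
    rcases abs_cases (c k₁ - c k₀) with ⟨he, _⟩ | ⟨he, _⟩ <;> rw [he] at this <;> linarith

theorem oneD_int {ι : Type*} {S : Set ι} {c : ι → ℝ}
    (sep : ∀ i ∈ S, ∀ k ∈ S, i ≠ k → 1 ≤ |c i - c k|)
    (cov : volume ((⋃ i ∈ S, Ico (c i) (c i + 1))ᶜ) = 0) :
    ∀ i ∈ S, ∀ k ∈ S, ∃ z : ℤ, c k - c i = z := by
  have main : ∀ n : ℕ, ∀ i ∈ S, ∀ k ∈ S, c i ≤ c k → c k ≤ c i + n → ∃ z : ℤ, c k - c i = z := by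
    intro n
    induction n with
    | zero =>
      intro i hi k hk h1 h2
      exact ⟨0, by push_cast; push_cast at h2; linarith⟩
    | succ n ih =>
      intro i hi k hk h1 h2
      rcases eq_or_lt_of_le h1 with he | hlt
      · exact ⟨0, by rw [← he]; push_cast; ring⟩
      · have hki : k ≠ i := by intro h; rw [h] at hlt; linarith
        have hsep := sep k hk i hi hki
        have h3 : c i + 1 ≤ c k := by
          rcases abs_cases (c k - c i) with ⟨he, _⟩ | ⟨he, _⟩ <;> rw [he] at hsep <;> linarith
        obtain ⟨i', hi'S, hi'⟩ := oneD_succ sep cov hi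
        obtain ⟨z, hz⟩ := ih i' hi'S k hk (by linarith) (by push_cast; push_cast at h2; linarith)
        exact ⟨z + 1, by push_cast; push_cast at hz; linarith⟩
  intro i hi k hk
  rcases le_total (c i) (c k) with hle | hle
  · obtain ⟨n, hn⟩ := exists_nat_ge (c k - c i)
    exact main n i hi k hk hle (by linarith)
  · obtain ⟨n, hn⟩ := exists_nat_ge (c i - c k)
    obtain ⟨z, hz⟩ := main n k hk i hi hle (by linarith)
    exact ⟨-z, by push_cast; linarith⟩

theorem move {Y : Type*} [MeasurableSpace Y] {ν : Measure Y}
    {ι : Type*} [Countable ι] {B : ι → Set Y} (hB : ∀ i, MeasurableSet (B i))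
    (c δ : ι → ℝ) (hcong : ∀ i k : ι, (∃ z : ℤ, c k - c i = z) → δ i = δ k)
    (h : Tiles (ν.prod volume) fun i => B i ×ˢ Ico (c i) (c i + 1)) :
    Tiles (ν.prod volume) fun i => B i ×ˢ Ico (c i + δ i) (c i + δ i + 1) := by
  classical
  have hpair : ∀ i k : ι, i ≠ k → ν (B i ∩ B k) = 0 ∨ 1 ≤ |c i - c k| := by
    intro i k hik
    have h2 := h.2 i k hik
    rw [prod_inter_prod, Measure.prod_prod] at h2
    rcases mul_eq_zero.1 h2 with h0 | h0
    · exact Or.inl h0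
    · exact Or.inr (vol_Ico_inter.1 h0)
  set N : Set Y := ⋃ (p : ι × ι) (_ : ν (B p.1 ∩ B p.2) = 0), (B p.1 ∩ B p.2) with hNdef
  have hN : ν N = 0 :=
    measure_iUnion_null fun p => measure_iUnion_null fun hp => hp
  have hNae : ∀ᵐ y ∂ν, y ∉ N := measure_eq_zero_iff_ae_notMem.1 hN
  have slice_eq : ∀ (f : ι → ℝ) (y : Y),
      Prod.mk y ⁻¹' (⋃ i, B i ×ˢ Ico (f i) (f i + 1))ᶜ
        = (⋃ i, ⋃ (_ : y ∈ B i), Ico (f i) (f i + 1))ᶜ := by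
    intro f y
    ext x
    simp [Set.mem_prod]
  have hUm : MeasurableSet (⋃ i, B i ×ˢ Ico (c i) (c i + 1)) :=
    MeasurableSet.iUnion fun i => (hB i).prod measurableSet_Ico
  have hcovae : ∀ᵐ y ∂ν, volume ((⋃ i, ⋃ (_ : y ∈ B i), Ico (c i) (c i + 1))ᶜ) = 0 := by
    have h1 := (Measure.measure_prod_null hUm.compl).1 h.1
    filter_upwards [h1] with y hy
    rw [← slice_eq c y]
    simpa using hy
  have key_y : ∀ y : Y, volume ((⋃ i, ⋃ (_ : y ∈ B i), Ico (c i) (c i + 1))ᶜ) = 0 → y ∉ N →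
      ∀ i, y ∈ B i → ∀ k, y ∈ B k → ∃ z : ℤ, c k - c i = z := by
    intro y hcov hyN
    have sep : ∀ i ∈ {i | y ∈ B i}, ∀ k ∈ {i | y ∈ B i}, i ≠ k → 1 ≤ |c i - c k| := by
      intro i hi k hk hik
      rcases hpair i k hik with h0 | h0
      · exact absurd (show y ∈ N by
          simp only [hNdef, mem_iUnion]; exact ⟨(i, k), h0, hi, hk⟩) hyN
      · exact h0
    intro i hi k hk
    exact oneD_int sep hcov i hi k hk
  have col : ∀ i k : ι, ν (B i ∩ B k) ≠ 0 → ∃ z : ℤ, c k - c i = z := by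
    intro i k hik0
    have hae := hcovae.and hNae
    rcases (frequently_ae_mem_iff.2 hik0).and_eventually hae |>.exists with ⟨y, hyB, hy1, hy2⟩
    exact key_y y hy1 hy2 i hyB.1 k hyB.2
  constructor
  · have hUm' : MeasurableSet (⋃ i, B i ×ˢ Ico (c i + δ i) (c i + δ i + 1)) :=
      MeasurableSet.iUnion fun i => (hB i).prod measurableSet_Ico
    rw [Measure.measure_prod_null hUm'.compl]
    have hslices : ∀ᵐ y ∂ν,
        volume ((⋃ i, ⋃ (_ : y ∈ B i), Ico (c i + δ i) (c i + δ i + 1))ᶜ) = 0 := by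
      filter_upwards [hcovae, hNae] with y hy1 hy2
      rcases eq_or_ne {i | y ∈ B i} ∅ with hS | hS
      · have hno : ∀ i, y ∉ B i := by
          intro i hi
          exact (eq_empty_iff_forall_notMem.1 hS i) hi
        have h1 : (⋃ i, ⋃ (_ : y ∈ B i), Ico (c i + δ i) (c i + δ i + 1))
            = (⋃ i, ⋃ (_ : y ∈ B i), Ico (c i) (c i + 1)) := by
          simp [hno]
        rw [h1]
        exact hy1
      · obtain ⟨i₀, hi₀⟩ := nonempty_iff_ne_empty.2 hS
        have hi₀' : y ∈ B i₀ := hi₀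
        have hall : ∀ i, y ∈ B i → δ i = δ i₀ := by
          intro i hiB
          exact (hcong i₀ i (key_y y hy1 hy2 i₀ hi₀' i hiB)).symm
        have hset : (⋃ i, ⋃ (_ : y ∈ B i), Ico (c i + δ i) (c i + δ i + 1))
            = (fun x => x + -δ i₀) ⁻¹' (⋃ i, ⋃ (_ : y ∈ B i), Ico (c i) (c i + 1)) := by
          ext x
          simp only [mem_iUnion, mem_preimage, mem_Ico]
          constructor
          · rintro ⟨i, hiB, hx1, hx2⟩
            rw [hall i hiB] at hx1 hx2
            exact ⟨i, hiB, by linarith, by linarith⟩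
          · rintro ⟨i, hiB, hx1, hx2⟩
            refine ⟨i, hiB, ?_, ?_⟩ <;> rw [hall i hiB] <;> linarith
        rw [hset, ← preimage_compl, measure_preimage_add_right]
        exact hy1
    filter_upwards [hslices] with y hy
    have := slice_eq (fun i => c i + δ i) y
    simp only [Pi.zero_apply]
    rw [this]
    exact hy
  · intro i k hik
    rw [prod_inter_prod, Measure.prod_prod]
    rcases eq_or_ne (ν (B i ∩ B k)) 0 with h0 | h0
    · rw [h0, zero_mul]
    · have hdelta : δ i = δ k := hcong i k (col i k h0)
      have hsep : 1 ≤ |c i - c k| := by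
        rcases hpair i k hik with hcon | hs
        · exact absurd hcon h0
        · exact hs
      have hz : volume (Ico (c i + δ i) (c i + δ i + 1) ∩ Ico (c k + δ k) (c k + δ k + 1)) = 0 := by
        apply vol_Ico_inter.2
        rw [hdelta]
        have he : c i + δ k - (c k + δ k) = c i - c k := by ring
        rw [he]
        exact hsep
      rw [hz, mul_zero]

theorem mem_cube_add {d : ℕ} (s z : Fin d → ℝ) :
    z ∈ (fun x => x + s) '' unitCube d ↔ ∀ i, z i ∈ Ico (s i) (s i + 1) := by
  constructor
  · rintro ⟨x, hx, rfl⟩ i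
    have := hx i (mem_univ i)
    obtain ⟨h1, h2⟩ := this
    constructor
    · simpa using h1
    · simp only [Pi.add_apply]
      linarith
  · intro hz
    refine ⟨z - s, fun i _ => ?_, by simp⟩
    have := hz i
    obtain ⟨h1, h2⟩ := this
    constructor
    · simpa using h1
    · simp only [Pi.sub_apply]
      linarith

theorem cube_image_eq {d : ℕ} (s : Fin d → ℝ) :
    (fun x => x + s) '' unitCube d = Set.univ.pi fun i => Ico (s i) (s i + 1) := by
  ext z
  rw [mem_cube_add]
  simp [Set.mem_pi]

theorem cube_vol {d : ℕ} (s : Fin d → ℝ) :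
    volume ((fun x => x + s) '' unitCube d) = 1 := by
  rw [cube_image_eq, volume_pi_pi]
  simp [Real.volume_Ico]

-- the equivalence for coordinate j
noncomputable def eqv (m : ℕ) (j : Fin (m + 1)) :
    (Fin (m + 1) → ℝ) ≃ᵐ (Fin m → ℝ) × ℝ :=
  (MeasurableEquiv.piFinSuccAbove (fun _ => ℝ) j).trans
    (MeasurableEquiv.prodComm : ℝ × (Fin m → ℝ) ≃ᵐ _)

theorem eqv_mp (m : ℕ) (j : Fin (m + 1)) :
    MeasurePreserving (eqv m j) volume ((volume : Measure (Fin m → ℝ)).prod volume) := by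
  have h1 := measurePreserving_piFinSuccAbove (fun _ : Fin (m + 1) => (volume : Measure ℝ)) j
  have h2 : MeasurePreserving (Prod.swap : ℝ × (Fin m → ℝ) → (Fin m → ℝ) × ℝ)
      ((volume : Measure ℝ).prod (volume : Measure (Fin m → ℝ)))
      ((volume : Measure (Fin m → ℝ)).prod volume) := Measure.measurePreserving_swap
  have hfun : ⇑(eqv m j)
      = (Prod.swap : ℝ × (Fin m → ℝ) → _) ∘ ⇑(MeasurableEquiv.piFinSuccAbove (fun _ => ℝ) j) :=
    rfl
  rw [hfun]
  exact h2.comp h1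

theorem eqv_symm_preimage_cube (m : ℕ) (j : Fin (m + 1)) (s : Fin (m + 1) → ℝ) :
    (eqv m j).symm ⁻¹' ((fun x => x + s) '' unitCube (m + 1)) =
      (Set.univ.pi fun k => Ico (s (j.succAbove k)) (s (j.succAbove k) + 1)) ×ˢ
        Ico (s j) (s j + 1) := by
  ext p
  obtain ⟨y, r⟩ := p
  have he : (eqv m j).symm (y, r) = j.insertNth r y := by
    show (MeasurableEquiv.piFinSuccAbove (fun _ => ℝ) j).symm
      ((MeasurableEquiv.prodComm : ℝ × (Fin m → ℝ) ≃ᵐ _).symm (y, r)) = j.insertNth r y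
    simp [MeasurableEquiv.piFinSuccAbove, MeasurableEquiv.prodComm, Fin.insertNthEquiv]
  simp only [mem_preimage, he, mem_cube_add, mem_prod, Set.mem_pi, mem_univ, forall_true_left]
  rw [Fin.forall_iff_succAbove j]
  simp only [Fin.insertNth_apply_same, Fin.insertNth_apply_succAbove]
  tauto

theorem countable_of_tiling {d : ℕ} {T : Set (Fin d → ℝ)}
    (h : IsTiling volume (unitCube d) T) : T.Countable := by
  have hsub : T ⊆ ⋃ n : ℕ, {t ∈ T | ∀ i, |t i| ≤ (n : ℝ)} := by
    intro t ht
    have hex : ∃ n : ℕ, ∀ i, |t i| ≤ (n : ℝ) := by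
      refine ⟨Finset.univ.sup fun i => ⌈|t i|⌉₊, fun i => ?_⟩
      calc |t i| ≤ (⌈|t i|⌉₊ : ℝ) := Nat.le_ceil _
        _ ≤ _ := Nat.cast_le.2 (Finset.le_sup (f := fun i => ⌈|t i|⌉₊) (Finset.mem_univ i))
    obtain ⟨n, hn⟩ := hex
    exact mem_iUnion.2 ⟨n, ht, hn⟩
  refine Set.Countable.mono hsub (countable_iUnion fun n => Set.Finite.countable ?_)
  by_contra hinf
  rw [← Set.not_infinite, not_not] at hinf
  set K := Set.univ.pi fun _ : Fin d => Icc (-(n : ℝ) - 1) ((n : ℝ) + 1) with hK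
  have hKc : IsCompact K := isCompact_univ_pi fun _ => isCompact_Icc
  have hKfin : volume K ≠ ⊤ := hKc.measure_lt_top.ne
  obtain ⟨N, hN⟩ := ENNReal.exists_nat_gt hKfin
  obtain ⟨F, hFsub, hFcard⟩ := hinf.exists_subset_card_eq N
  have hmem : ∀ t ∈ F, t ∈ T ∧ ∀ i, |t i| ≤ (n : ℝ) := fun t htF => hFsub htF
  have hsum : volume (⋃ t ∈ F, (fun x => x + t) '' unitCube d)
      = ∑ t ∈ F, volume ((fun x => x + t) '' unitCube d) := by
    apply measure_biUnion_finset₀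
    · intro t htF t' htF' hne
      exact h.2 t (hmem t htF).1 t' (hmem t' htF').1 hne
    · intro t _
      rw [cube_image_eq]
      exact (MeasurableSet.univ_pi fun i => measurableSet_Ico).nullMeasurableSet
  have hsubK : (⋃ t ∈ F, (fun x => x + t) '' unitCube d) ⊆ K := by
    intro x hx
    simp only [mem_iUnion] at hx
    obtain ⟨t, htF, hxt⟩ := hx
    rw [cube_image_eq] at hxt
    intro i _
    have h1 := hxt i (mem_univ i)
    have h2 := (hmem t htF).2 i
    have h3 := abs_le.1 h2
    simp only [mem_Ico] at h1
    rw [mem_Icc]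
    constructor
    · linarith [h1.1, h3.1]
    · linarith [h1.2, h3.2]
  have hcard : (N : ℝ≥0∞) ≤ volume K := by
    calc (N : ℝ≥0∞) = ∑ t ∈ F, volume ((fun x => x + t) '' unitCube d) := by
          have he : ∑ t ∈ F, volume ((fun x => x + t) '' unitCube d) = ∑ _t ∈ F, 1 :=
            Finset.sum_congr rfl fun t _ => cube_vol t
          rw [he, Finset.sum_const, hFcard, nsmul_eq_mul, mul_one]
      _ = volume (⋃ t ∈ F, (fun x => x + t) '' unitCube d) := hsum.symm
      _ ≤ volume K := measure_mono hsubK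
  exact absurd hN (not_lt.2 hcard)

-- contradiction when two identical cubes occur
theorem tiles_eq_contra {d : ℕ} {ι : Type*} {F : ι → Fin d → ℝ}
    (hT : Tiles (volume : Measure (Fin d → ℝ)) (fun i => (fun x => x + F i) '' unitCube d))
    {a b : ι} (hab : a ≠ b) (hFab : F a = F b) : False := by
  have h2 : volume (((fun x => x + F a) '' unitCube d) ∩ ((fun x => x + F b) '' unitCube d)) = 0 :=
    hT.2 a b hab
  rw [hFab, inter_self, cube_vol] at h2
  exact one_ne_zero h2

theorem key {m : ℕ} {ι : Type*} [Countable ι] :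
    ∀ (n : ℕ) (F : ι → Fin (m + 1) → ℝ),
      Tiles (volume : Measure (Fin (m + 1) → ℝ))
        (fun i => (fun x => x + F i) '' unitCube (m + 1)) →
      ∀ a b : ι, a ≠ b →
      (∀ j, ¬ ∃ z : ℤ, z ≠ 0 ∧ F a j - F b j = z) →
      (Finset.univ.filter fun j => F a j ≠ F b j).card ≤ n → False := by
  intro n
  induction n with
  | zero =>
    intro F hT a b hab hnon hcard
    apply tiles_eq_contra hT hab
    funext j
    by_contra hj
    have hjmem : j ∈ Finset.univ.filter fun j => F a j ≠ F b j := by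
      simp [hj]
    rw [Nat.le_zero, Finset.card_eq_zero] at hcard
    rw [hcard] at hjmem
    exact absurd hjmem (Finset.notMem_empty j)
  | succ n ih =>
    intro F hT a b hab hnon hcard
    classical
    by_cases hFab : F a = F b
    · exact tiles_eq_contra hT hab hFab
    obtain ⟨j, hj⟩ := Function.ne_iff.1 hFab
    set ρ : ℝ := F b j with hρ
    set lam : ℝ := F a j - F b j with hlam
    have hlamne : lam ≠ 0 := sub_ne_zero.2 hj
    have hlamnotint : ¬ ∃ z : ℤ, lam = z := by
      rintro ⟨z, hz⟩
      have hzne : z ≠ 0 := by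
        rintro rfl
        exact hlamne (by simpa using hz)
      exact hnon j ⟨z, hzne, by rw [← hlam]; exact hz⟩
    set c : ι → ℝ := fun i => F i j with hc
    set δ : ι → ℝ := fun i => if ∃ z : ℤ, c i - ρ = z then lam else 0 with hδ
    have hcong : ∀ i k : ι, (∃ z : ℤ, c k - c i = z) → δ i = δ k := by
      intro i k ⟨z, hz⟩
      have hiff : (∃ w : ℤ, c i - ρ = w) ↔ ∃ w : ℤ, c k - ρ = w := by
        constructor
        · rintro ⟨w, hw⟩; exact ⟨w + z, by push_cast; linarith⟩
        · rintro ⟨w, hw⟩; exact ⟨w - z, by push_cast; linarith⟩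
      simp only [hδ]
      by_cases hcc : ∃ w : ℤ, c i - ρ = w
      · rw [if_pos hcc, if_pos (hiff.1 hcc)]
      · rw [if_neg hcc, if_neg fun hc' => hcc (hiff.2 hc')]
    have hδa : δ a = 0 := by
      rw [hδ]
      simp only
      rw [if_neg]
      rintro ⟨z, hz⟩
      exact hlamnotint ⟨z, by rw [hlam, hρ] at *; exact hz⟩
    have hδb : δ b = lam := by
      rw [hδ]
      simp only
      rw [if_pos ⟨0, by simp [hc, hρ]⟩]
    set B : ι → Set (Fin m → ℝ) := fun i =>
      Set.univ.pi fun k => Ico (F i (j.succAbove k)) (F i (j.succAbove k) + 1) with hBdef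
    have hB : ∀ i, MeasurableSet (B i) := fun i =>
      MeasurableSet.univ_pi fun k => measurableSet_Ico
    have mp := eqv_mp m j
    have h1 : Tiles ((volume : Measure (Fin m → ℝ)).prod volume)
        (fun i => B i ×ˢ Ico (c i) (c i + 1)) := by
      have h0 := tiles_preimage (eqv m j).symm (MeasurePreserving.symm _ mp) hT
      have hsets : (fun i => (eqv m j).symm ⁻¹' ((fun x => x + F i) '' unitCube (m + 1)))
          = fun i => B i ×ˢ Ico (c i) (c i + 1) :=
        funext fun i => eqv_symm_preimage_cube m j (F i)
      rwa [hsets] at h0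
    have h2 := move hB c δ hcong h1
    have h3 := tiles_preimage (eqv m j) mp h2
    set G : ι → Fin (m + 1) → ℝ := fun i => Function.update (F i) j (F i j + δ i) with hGdef
    have hGoff : ∀ i k, G i (j.succAbove k) = F i (j.succAbove k) := by
      intro i k
      rw [hGdef]
      exact Function.update_of_ne (j.succAbove_ne k) _ _
    have hGj : ∀ i, G i j = F i j + δ i := by
      intro i
      rw [hGdef]
      exact Function.update_self _ _ _
    have hGsets : (fun i => (eqv m j) ⁻¹' (B i ×ˢ Ico (c i + δ i) (c i + δ i + 1)))
        = fun i => (fun x => x + G i) '' unitCube (m + 1) := by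
      funext i
      have h4 := eqv_symm_preimage_cube m j (G i)
      have hBi : (Set.univ.pi fun k => Ico (G i (j.succAbove k)) (G i (j.succAbove k) + 1))
          = B i := by
        rw [hBdef]
        simp only [hGoff]
      have hcj : G i j = c i + δ i := hGj i
      rw [hBi, hcj] at h4
      rw [← h4]
      ext x
      simp [MeasurableEquiv.symm_apply_apply]
    rw [hGsets] at h3
    -- facts about G a, G b
    have hGa : G a = F a := by
      rw [hGdef]
      simp only [hδa, add_zero]
      exact Function.update_eq_self _ _
    have hGbj : G b j = F a j := by
      rw [hGj, hδb, hlam]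
      ring
    have hGboff : ∀ k, k ≠ j → G b k = F b k := by
      intro k hk
      rw [hGdef]
      exact Function.update_of_ne hk _ _
    refine ih G h3 a b hab ?_ ?_
    · intro k
      rcases eq_or_ne k j with rfl | hkj
      · rintro ⟨z, hzne, hzeq⟩
        rw [hGa, hGbj] at hzeq
        simp only [sub_self] at hzeq
        exact hzne (by exact_mod_cast hzeq.symm)
      · rintro ⟨z, hzne, hzeq⟩
        rw [hGa, hGboff k hkj] at hzeq
        exact hnon k ⟨z, hzne, hzeq⟩
    · have hsubset : (Finset.univ.filter fun k => G a k ≠ G b k)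
          ⊆ (Finset.univ.filter fun k => F a k ≠ F b k).erase j := by
        intro k hk
        simp only [Finset.mem_filter, Finset.mem_univ, true_and] at hk
        have hkj : k ≠ j := by
          rintro rfl
          rw [hGa, hGbj] at hk
          exact hk rfl
        rw [Finset.mem_erase]
        refine ⟨hkj, ?_⟩
        simp only [Finset.mem_filter, Finset.mem_univ, true_and]
        rw [hGa, hGboff k hkj] at hk
        exact hk
      have hjmem : j ∈ Finset.univ.filter fun k => F a k ≠ F b k := by
        simp [hj]; exact hj
      calc (Finset.univ.filter fun k => G a k ≠ G b k).card
          ≤ ((Finset.univ.filter fun k => F a k ≠ F b k).erase j).card :=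
            Finset.card_le_card hsubset
        _ = (Finset.univ.filter fun k => F a k ≠ F b k).card - 1 :=
            Finset.card_erase_of_mem hjmem
        _ ≤ n := by omega


end KellerAux

/-- Keller's theorem: if the translates of the unit cube `I^d` by `T` tile `ℝ^d` and
`t ≠ t'` in `T`, then some coordinate of `t − t'` is a nonzero integer. -/
theorem stmt13 (d : ℕ) (T : Set (Fin d → ℝ)) (h : IsTiling volume (unitCube d) T)
    (t t' : Fin d → ℝ) (ht : t ∈ T) (ht' : t' ∈ T) (hne : t ≠ t') :
    ∃ j : Fin d, ∃ n : ℤ, n ≠ 0 ∧ t j - t' j = n := by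
  by_contra hcon
  push_neg at hcon
  cases d with
  | zero => exact hne (Subsingleton.elim t t')
  | succ m =>
    have hcount : T.Countable := countable_of_tiling h
    haveI := hcount.to_subtype
    have hT : Tiles (volume : Measure (Fin (m + 1) → ℝ))
        (fun i : T => (fun x => x + (i : Fin (m + 1) → ℝ)) '' unitCube (m + 1)) := by
      constructor
      · have he : (⋃ i : T, (fun x => x + (i : Fin (m + 1) → ℝ)) '' unitCube (m + 1))
            = ⋃ s ∈ T, (fun x => x + s) '' unitCube (m + 1) := by
          rw [Set.iUnion_coe_set]
        rw [he]
        exact h.1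
      · rintro ⟨x, hx⟩ ⟨y, hy⟩ hxy
        exact h.2 x hx y hy fun hh => hxy (Subtype.ext hh)
    refine key (m + 1) (fun i : T => (i : Fin (m + 1) → ℝ)) hT ⟨t, ht⟩ ⟨t', ht'⟩ ?_ ?_ ?_
    · intro hh
      exact hne (congrArg Subtype.val hh)
    · rintro j ⟨z, hz0, hzeq⟩
      exact hcon j z hz0 hzeq
    · calc (Finset.univ.filter fun j =>
            (fun i : T => (i : Fin (m + 1) → ℝ)) ⟨t, ht⟩ j
              ≠ (fun i : T => (i : Fin (m + 1) → ℝ)) ⟨t', ht'⟩ j).card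
          ≤ (Finset.univ : Finset (Fin (m + 1))).card := Finset.card_filter_le _ _
        _ = m + 1 := by simp
end
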